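/- Let $n,r,k,t$ be positive integers with $k\ge2$ and $t+2\le r\le n$. Then $|\mathcal{H}_1(n,r,k,t+2,t)| = (t+2)\binom{n-t-1}{r-t-1}k^{r-t-1} - (t+1)\binom{n-t-2}{r-t-2}k^{r-t-2}$. -/

import Mathlib

open Finset

attribute [local instance] Classical.propDecidable

/-- The ground set `[n] × [k]`. -/
def box (n k : ℕ) : Finset (ℕ × ℕ) := Finset.Icc 1 n ×ˢ Finset.Icc 1 k

/-- A `k`-signed set on `[n]`: a subset of `[n] × [k]` with pairwise distinct first coordinates. -/
def IsSigned (n k : ℕ) (T : Finset (ℕ × ℕ)) : Prop :=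
  T ⊆ box n k ∧ (T.image Prod.fst).card = T.card

/-- `L n r k`: the collection of `k`-signed `r`-sets on `[n]`. -/
def L (n r k : ℕ) : Finset (Finset (ℕ × ℕ)) :=
  (box n k).powerset.filter (fun F => F.card = r ∧ (F.image Prod.fst).card = r)

/-- A family is `t`-intersecting if any two members meet in at least `t` elements. -/
def IsTIntersecting (t : ℕ) (F : Finset (Finset (ℕ × ℕ))) : Prop :=
  ∀ A ∈ F, ∀ B ∈ F, t ≤ (A ∩ B).card

/-- `T` is a `t`-cover of the family `F`: a `k`-signed set meeting every member in ≥ `t` points. -/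
def IsTCover (n k t : ℕ) (F : Finset (Finset (ℕ × ℕ))) (T : Finset (ℕ × ℕ)) : Prop :=
  IsSigned n k T ∧ ∀ A ∈ F, t ≤ (T ∩ A).card

/-- `F` is a maximal `t`-intersecting subfamily of `L n r k`. -/
def IsMaximalTIntersecting (n r k t : ℕ) (F : Finset (Finset (ℕ × ℕ))) : Prop :=
  F ⊆ L n r k ∧ IsTIntersecting t F ∧
    ∀ G ⊆ L n r k, IsTIntersecting t G → F ⊆ G → G = F

/-- A `t`-intersecting family is trivial if all members contain a fixed `k`-signed `t`-set. -/
def IsTrivial (n k t : ℕ) (F : Finset (Finset (ℕ × ℕ))) : Prop :=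
  ∃ T, IsSigned n k T ∧ T.card = t ∧ ∀ A ∈ F, T ⊆ A

/-- `Msig d = {(1,1),(2,1),…,(d,1)}`. -/
def Msig (d : ℕ) : Finset (ℕ × ℕ) := (Finset.Icc 1 d).image (fun x => (x, 1))

/-- The family `H₁(n,r,k,ℓ,t)`. -/
def H1 (n r k l t : ℕ) : Finset (Finset (ℕ × ℕ)) :=
  (L n r k).filter (fun F =>
    (Msig t ⊆ F ∧ t + 1 ≤ (F ∩ Msig l).card) ∨
    (¬ Msig t ⊆ F ∧ (F ∩ Msig l).card = l - 1))

/-- The family `H₂(n,r,k,c,t)`. -/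
def H2 (n r k c t : ℕ) : Finset (Finset (ℕ × ℕ)) :=
  (L n r k).filter (fun F =>
    (Msig t ⊆ F ∧ t + 1 ≤ (F ∩ Msig r).card) ∨
    (F ∩ Msig r = Msig t ∧ Msig c \ Msig r ⊆ F) ∨
    (¬ Msig t ⊆ F ∧ (F ∩ Msig r).card = r - 1 ∧ (F ∩ (Msig c \ Msig r)).card = 1))

/-- The set of all `t`-covers of `F` of size `t+1`. -/
noncomputable def TauSet (n k t : ℕ) (F : Finset (Finset (ℕ × ℕ))) : Finset (Finset (ℕ × ℕ)) :=
  (box n k).powerset.filter (fun T => IsTCover n k t F T ∧ T.card = t + 1)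

/-!
Write `M = M_{t+2}`. Since `|M| = t + 2` and `|F ∩ M| = t + 2` forces `M_t ⊆ F`, a set `F ∈ L`
lies in `H₁` exactly when it misses at most one point of `M`. Counting the pairs `(m, F)` with
`M ∖ {m} ⊆ F` counts every such `F` once, except that each `F ⊇ M` is counted `t + 2` times.
Finally, the members of `L` containing a fixed signed `s`-set are obtained by choosing `r - s` of
the remaining `n - s` coordinates and a sign for each: `C(n - s, r - s) k^(r - s)` of them.
-/

section SignedSubsets

variable {α β : Type*} [DecidableEq α]

def signedSubsets (X : Finset α) (Y : Finset β) (m : ℕ) : Finset (Finset (α × β)) :=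
  (X ×ˢ Y).powerset.filter (fun T => T.card = m ∧ (T.image Prod.fst).card = m)

theorem L_eq_signedSubsets (n r k : ℕ) : L n r k = signedSubsets (Icc 1 n) (Icc 1 k) r := rfl

theorem mem_signedSubsets {X : Finset α} {Y : Finset β} {m : ℕ} {T : Finset (α × β)} :
    T ∈ signedSubsets X Y m ↔ T ⊆ X ×ˢ Y ∧ #T = m ∧ Set.InjOn Prod.fst (T : Set (α × β)) := by
  simp only [signedSubsets, mem_filter, mem_powerset]
  constructor
  · rintro ⟨hT, hcard, himage⟩
    exact ⟨hT, hcard, card_image_iff.1 (himage.trans hcard.symm)⟩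
  · rintro ⟨hT, hcard, hinj⟩
    exact ⟨hT, hcard, (card_image_of_injOn hinj).trans hcard⟩

theorem signedSubsets_zero (X : Finset α) (Y : Finset β) : signedSubsets X Y 0 = {∅} := by
  ext T
  simp only [mem_signedSubsets, card_eq_zero, mem_singleton]
  constructor
  · exact fun h => h.2.1
  · rintro rfl
    simp

theorem signedSubsets_empty_succ (Y : Finset β) (m : ℕ) :
    signedSubsets (∅ : Finset α) Y (m + 1) = ∅ := by
  ext T
  simp only [mem_signedSubsets, empty_product, subset_empty, notMem_empty, iff_false]
  rintro ⟨rfl, h, -⟩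
  simp at h

theorem signedSubsets_insert_succ [DecidableEq β] {a : α} {X : Finset α} (ha : a ∉ X)
    (Y : Finset β) (m : ℕ) :
    signedSubsets (insert a X) Y (m + 1) =
      signedSubsets X Y (m + 1) ∪
        (Y ×ˢ signedSubsets X Y m).image (fun p => insert (a, p.1) p.2) := by
  ext T
  simp only [mem_union, mem_image, mem_product, mem_signedSubsets, Prod.exists]
  constructor
  · rintro ⟨hT, hcard, hinj⟩
    by_cases haT : ∃ b, (a, b) ∈ T
    · obtain ⟨b, hab⟩ := haT
      right
      refine ⟨b, T.erase (a, b), ⟨(mem_product.1 (hT hab)).2, ?_, ?_, ?_⟩, insert_erase hab⟩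
      · intro p hp
        obtain ⟨hpab, hpT⟩ := mem_erase.1 hp
        obtain ⟨hpX, hpY⟩ := mem_product.1 (hT hpT)
        refine mem_product.2 ⟨(mem_insert.1 hpX).resolve_left fun hpa => hpab ?_, hpY⟩
        exact hinj hpT hab hpa
      · rw [card_erase_of_mem hab, hcard, Nat.add_sub_cancel]
      · exact hinj.mono (by simp)
    · push Not at haT
      refine Or.inl ⟨fun p hp => ?_, hcard, hinj⟩
      obtain ⟨hpX, hpY⟩ := mem_product.1 (hT hp)
      refine mem_product.2 ⟨(mem_insert.1 hpX).resolve_left fun hpa => ?_, hpY⟩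
      exact haT p.2 (hpa ▸ hp)
  · rintro (⟨hT, hcard, hinj⟩ | ⟨b, T', ⟨hb, hT', hcard, hinj⟩, rfl⟩)
    · exact ⟨hT.trans (product_subset_product_left (subset_insert a X)), hcard, hinj⟩
    · have hfst : ∀ p ∈ T', p.1 ∈ X := fun p hp => (mem_product.1 (hT' hp)).1
      have habT' : (a, b) ∉ T' := fun h => ha (hfst _ h)
      refine ⟨?_, by rw [card_insert_of_notMem habT', hcard], ?_⟩
      · refine insert_subset (mem_product.2 ⟨mem_insert_self a X, hb⟩) ?_
        exact hT'.trans (product_subset_product_left (subset_insert a X))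
      · rw [coe_insert, Set.injOn_insert (by exact_mod_cast habT')]
        refine ⟨hinj, ?_⟩
        rintro ⟨p, hp, hpa⟩
        exact ha (by simpa [hpa] using hfst p hp)

theorem card_signedSubsets (X : Finset α) (Y : Finset β) (m : ℕ) :
    #(signedSubsets X Y m) = (#X).choose m * #Y ^ m := by
  classical
  induction X using Finset.induction generalizing m with
  | empty => cases m <;> simp [signedSubsets_zero, signedSubsets_empty_succ]
  | @insert a X ha ih =>
    cases m with
    | zero => simp [signedSubsets_zero]
    | succ m =>
      have hdisj : Disjoint (signedSubsets X Y (m + 1))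
          ((Y ×ˢ signedSubsets X Y m).image (fun p => insert (a, p.1) p.2)) := by
        refine disjoint_left.2 fun T hT hT' => ?_
        obtain ⟨p, -, rfl⟩ := mem_image.1 hT'
        exact ha (mem_product.1 ((mem_signedSubsets.1 hT).1 (mem_insert_self _ _))).1
      have hinj : Set.InjOn (fun p : β × Finset (α × β) => insert (a, p.1) p.2)
          (Y ×ˢ signedSubsets X Y m : Finset _) := by
        rintro ⟨b, T⟩ hbT ⟨b', T'⟩ hbT' heq
        have hnotin : ∀ c, ∀ S ∈ signedSubsets X Y m, (a, c) ∉ S := fun c S hS h =>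
          ha (mem_product.1 ((mem_signedSubsets.1 hS).1 h)).1
        have hT := (mem_product.1 hbT).2
        have hT' := (mem_product.1 hbT').2
        dsimp only at heq
        have hbb' : b = b' := by
          have h := heq ▸ mem_insert_self (a, b) T
          exact (Prod.ext_iff.1 ((mem_insert.1 h).resolve_right (hnotin b T' hT'))).2
        subst hbb'
        rw [← erase_insert (hnotin b T hT), heq, erase_insert (hnotin b T' hT')]
      rw [signedSubsets_insert_succ ha, card_union_of_disjoint hdisj,
        card_image_of_injOn hinj, card_product, ih, ih, card_insert_of_notMem ha,
        Nat.choose_succ_succ']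
      ring

theorem card_filter_superset_signedSubsets [DecidableEq β] {X : Finset α} {Y : Finset β}
    {S : Finset (α × β)} (hS : S ⊆ X ×ˢ Y) (hSinj : Set.InjOn Prod.fst (S : Set (α × β)))
    {r : ℕ} (hr : #S ≤ r) :
    #{F ∈ signedSubsets X Y r | S ⊆ F} = (#X - #S).choose (r - #S) * #Y ^ (r - #S) := by
  set X' := X \ S.image Prod.fst
  have hfst_ne : ∀ T ∈ signedSubsets X' Y (r - #S), ∀ p ∈ T, ∀ q ∈ S, p.1 ≠ q.1 :=
    fun T hT p hp q hq hpq => (mem_sdiff.1 (mem_product.1 ((mem_signedSubsets.1 hT).1 hp)).1).2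
      (mem_image.2 ⟨q, hq, hpq.symm⟩)
  have hdisj : ∀ T ∈ signedSubsets X' Y (r - #S), Disjoint T S :=
    fun T hT => disjoint_left.2 fun p hp hpS => hfst_ne T hT p hp p hpS rfl
  have hcard : #{F ∈ signedSubsets X Y r | S ⊆ F} = #(signedSubsets X' Y (r - #S)) := by
    refine card_nbij' (· \ S) (· ∪ S) ?_ ?_ ?_ ?_
    · intro F hF
      obtain ⟨hF, hSF⟩ := mem_filter.1 hF
      obtain ⟨hFXY, hFcard, hFinj⟩ := mem_signedSubsets.1 hF
      refine mem_signedSubsets.2 ⟨fun p hp => ?_, ?_, hFinj.mono (by simp)⟩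
      · obtain ⟨hpF, hpS⟩ := mem_sdiff.1 hp
        obtain ⟨hpX, hpY⟩ := mem_product.1 (hFXY hpF)
        refine mem_product.2 ⟨mem_sdiff.2 ⟨hpX, fun hpS' => ?_⟩, hpY⟩
        obtain ⟨q, hq, hqp⟩ := mem_image.1 hpS'
        exact hpS (hFinj hpF (hSF hq) hqp.symm ▸ hq)
      · rw [card_sdiff_of_subset hSF, hFcard]
    · intro T hT
      obtain ⟨hTXY, hTcard, hTinj⟩ := mem_signedSubsets.1 hT
      refine mem_filter.2 ⟨mem_signedSubsets.2 ⟨union_subset ?_ hS, ?_, ?_⟩, subset_union_right⟩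
      · exact hTXY.trans (product_subset_product_left sdiff_subset)
      · rw [card_union_of_disjoint (hdisj T hT), hTcard, Nat.sub_add_cancel hr]
      · rw [coe_union, Set.injOn_union (disjoint_coe.2 (hdisj T hT))]
        exact ⟨hTinj, hSinj, hfst_ne T hT⟩
    · exact fun F hF => sdiff_union_of_subset (mem_filter.1 hF).2
    · exact fun T hT => union_sdiff_cancel_right (hdisj T hT)
  have hX' : #X' = #X - #S := by
    rw [card_sdiff_of_subset, card_image_of_injOn hSinj]
    exact image_subset_iff.2 fun q hq => (mem_product.1 (hS hq)).1
  rw [hcard, card_signedSubsets, hX']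

end SignedSubsets

section ErasureCount

variable {α : Type*} [DecidableEq α]

theorem erase_subset_iff_sdiff_subset_singleton {M F : Finset α} {m : α} :
    M.erase m ⊆ F ↔ M \ F ⊆ {m} := by
  simp only [subset_iff, mem_erase, mem_sdiff, mem_singleton]
  exact ⟨fun h x hx => by_contra fun hxm => hx.2 (h ⟨hxm, hx.1⟩),
    fun h x hx => by_contra fun hxF => hx.1 (h ⟨hx.2, hxF⟩)⟩

theorem card_filter_erase_subset_add_ite (M F : Finset α) :
    #{m ∈ M | M.erase m ⊆ F} + (if M ⊆ F then 1 else 0) =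
      (if #(M \ F) ≤ 1 then 1 else 0) + #M * (if M ⊆ F then 1 else 0) := by
  simp only [erase_subset_iff_sdiff_subset_singleton]
  by_cases hMF : M ⊆ F
  · have hsdiff : M \ F = ∅ := sdiff_eq_empty_iff_subset.2 hMF
    simp [hMF, hsdiff, add_comm]
  · obtain ⟨x, hx⟩ : (M \ F).Nonempty := sdiff_nonempty.2 hMF
    by_cases hle : #(M \ F) ≤ 1
    · have hsingle : M \ F = {x} := eq_singleton_iff_unique_mem.2
        ⟨hx, fun y hy => card_le_one.1 hle y hy x hx⟩
      have hfilter : {m ∈ M | M \ F ⊆ {m}} = {x} := by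
        rw [hsingle]
        ext m
        simp only [mem_filter, singleton_subset_iff, mem_singleton]
        exact ⟨fun h => h.2.symm, fun h => ⟨h ▸ (mem_sdiff.1 hx).1, h.symm⟩⟩
      rw [hfilter]
      simp [hMF, hle]
    · have hfilter : {m ∈ M | M \ F ⊆ {m}} = ∅ :=
        filter_false_of_mem fun m _ hm => hle ((card_le_card hm).trans (card_singleton m).le)
      rw [hfilter]
      simp [hMF, hle]

theorem sum_card_filter_erase_subset (𝓕 : Finset (Finset α)) (M : Finset α) :
    ∑ m ∈ M, #{F ∈ 𝓕 | M.erase m ⊆ F} + #{F ∈ 𝓕 | M ⊆ F} =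
      #{F ∈ 𝓕 | #(M \ F) ≤ 1} + #M * #{F ∈ 𝓕 | M ⊆ F} := by
  have hswap : ∑ m ∈ M, #{F ∈ 𝓕 | M.erase m ⊆ F} = ∑ F ∈ 𝓕, #{m ∈ M | M.erase m ⊆ F} :=
    sum_card_bipartiteAbove_eq_sum_card_bipartiteBelow (fun m F => M.erase m ⊆ F)
  rw [hswap, card_filter (M ⊆ ·) 𝓕, card_filter (fun F => #(M \ F) ≤ 1) 𝓕, mul_sum,
    ← sum_add_distrib, ← sum_add_distrib]
  exact sum_congr rfl fun F _ => card_filter_erase_subset_add_ite M F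

end ErasureCount

theorem Msig_card (d : ℕ) : #(Msig d) = d := by
  rw [Msig, card_image_of_injective _ fun a b h => congrArg Prod.fst h, Nat.card_Icc,
    Nat.add_sub_cancel]

theorem Msig_mono {d e : ℕ} (h : d ≤ e) : Msig d ⊆ Msig e :=
  image_subset_image (Icc_subset_Icc le_rfl h)

theorem isSigned_Msig {d n k : ℕ} (hd : d ≤ n) (hk : 1 ≤ k) : IsSigned n k (Msig d) := by
  refine ⟨fun p hp => ?_, ?_⟩
  · obtain ⟨i, hi, rfl⟩ := mem_image.1 hp
    simp only [mem_Icc] at hi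
    change _ ∈ Icc 1 n ×ˢ Icc 1 k
    simp only [mem_product, mem_Icc]
    omega
  · rw [Msig_card, Msig, image_image]
    exact (card_image_of_injective (Icc 1 d) fun a b (h : a = b) => h).trans (by simp)

theorem IsSigned.subset {n k : ℕ} {S T : Finset (ℕ × ℕ)} (hS : IsSigned n k S) (hTS : T ⊆ S) :
    IsSigned n k T :=
  ⟨hTS.trans hS.1, card_image_of_injOn ((card_image_iff.1 hS.2).mono hTS)⟩

theorem card_filter_L_superset {n r k : ℕ} {S : Finset (ℕ × ℕ)} (hS : IsSigned n k S)
    (hSr : #S ≤ r) : #{F ∈ L n r k | S ⊆ F} = (n - #S).choose (r - #S) * k ^ (r - #S) := by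
  rw [L_eq_signedSubsets]
  simpa using card_filter_superset_signedSubsets hS.1 (card_image_iff.1 hS.2) hSr

theorem H1_t_plus_two_eq (n r k t : ℕ) :
    H1 n r k (t + 2) t = {F ∈ L n r k | #(Msig (t + 2) \ F) ≤ 1} := by
  refine filter_congr fun F _ => ?_
  have hsplit := card_sdiff_add_card_inter (Msig (t + 2)) F
  rw [Msig_card, inter_comm] at hsplit
  have hfull : #(F ∩ Msig (t + 2)) = t + 2 → Msig t ⊆ F := fun h =>
    have hinter : F ∩ Msig (t + 2) = Msig (t + 2) :=
      eq_of_subset_of_card_le inter_subset_right (by rw [h, Msig_card])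
    (Msig_mono (by omega)).trans (inter_eq_right.1 hinter)
  by_cases hMt : Msig t ⊆ F
  · simp only [hMt, not_true_eq_false, true_and, false_and, or_false]
    omega
  · simp only [hMt, not_false_eq_true, true_and, false_and, false_or]
    have := mt hfull hMt
    omega

theorem H1_card_t_plus_two_general (n r k t : ℕ)
    (hk : 2 ≤ k) (htr : t + 2 ≤ r) (hrn : r ≤ n) :
    ((H1 n r k (t + 2) t).card : ℤ) =
      (t + 2) * (n - t - 1).choose (r - t - 1) * (k : ℤ) ^ (r - t - 1) -
        (t + 1) * (n - t - 2).choose (r - t - 2) * (k : ℤ) ^ (r - t - 2) := by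
  set M := Msig (t + 2)
  have hsupersets : ∀ S ⊆ M,
      #{F ∈ L n r k | S ⊆ F} = (n - #S).choose (r - #S) * k ^ (r - #S) := fun S hS =>
    card_filter_L_superset ((isSigned_Msig (htr.trans hrn) (by omega)).subset hS)
      ((card_le_card hS).trans (by rw [Msig_card]; exact htr))
  have herase : ∀ m ∈ M, #{F ∈ L n r k | M.erase m ⊆ F} =
      (n - t - 1).choose (r - t - 1) * k ^ (r - t - 1) := fun m hm => by
    rw [hsupersets _ (erase_subset m M), card_erase_of_mem hm, Msig_card]
    rfl
  have hcount := sum_card_filter_erase_subset (L n r k) M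
  rw [sum_congr rfl herase, sum_const, smul_eq_mul, hsupersets M subset_rfl, Msig_card,
    ← H1_t_plus_two_eq, ← Nat.sub_sub, ← Nat.sub_sub] at hcount
  have hcountZ := congrArg (Nat.cast : ℕ → ℤ) hcount
  push_cast at hcountZ
  linear_combination -hcountZ

theorem H1_card_t_plus_two (n r k t : ℕ) (hn : 0 < n) (ht : 0 < t)
    (hk : 2 ≤ k) (htr : t + 2 ≤ r) (hrn : r ≤ n) :
    ((H1 n r k (t + 2) t).card : ℤ) =
      (t + 2) * (n - t - 1).choose (r - t - 1) * (k : ℤ) ^ (r - t - 1) -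
        (t + 1) * (n - t - 2).choose (r - t - 2) * (k : ℤ) ^ (r - t - 2) :=
  H1_card_t_plus_two_general n r k t hk htr hrn
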